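/- Let X be a real Banach space and let A, B : X ⇉ X* be maximal monotone operators with dom A ∩ int dom B ≠ ∅. Assume that A + N_{cl(dom B)} is maximal monotone of type (FPV) and that dom A ∩ cl(dom B) ⊆ dom B. Then cl(P_X[dom F_{A+B}]) = cl(dom A ∩ dom B), where F_{A+B} is the Fitzpatrick function of A + B and P_X : X × X* → X is the projection (x,x*) ↦ x. -/

import Mathlib

/-!
The inclusion `⊇` holds because `F_T (x, t) ≤ ⟨x, t⟩` on the graph of a monotone `T`.

For `⊆`, fix `(z, z*) ∈ dom F_{A+B}` and `x₀ ∈ dom A ∩ int dom B`; by Banach–Steinhaus `B` is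
bounded on a ball of radius `ρ` around `x₀`. A normal vector `ν ∈ N_C y` to `C = cl (dom B)` is
absorbed by `B`, so `a + b + ν ∈ (A + B) y` for `a ∈ A y`, `b ∈ B y`, and the Fitzpatrick
inequality at `(z, z*)` bounds `⟨x_t - y, a + ν⟩` over the graph of `A + N_C` within distance
`(1 - t) ρ` of `x_t = x₀ + t (z - x₀)`. With such a bound, the (FPV) property puts `x_t` into
`cl (dom (A + N_C)) = cl (dom A ∩ dom B)` as soon as this closure has a point within
`(1 - t) ρ / 2` of `x_t`. Hence the set of `t ∈ [0, 1]` with `x_t` in the closure is closed,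
contains `0` and is open to the right, so it contains `1`.
-/

open Set Filter Pointwise

noncomputable section

variable {X : Type*}

abbrev Dual' (X : Type*) [NormedAddCommGroup X] [NormedSpace ℝ X] := X →L[ℝ] ℝ

section Defs
variable [NormedAddCommGroup X] [NormedSpace ℝ X]

/-- `A` is a monotone operator. -/
def MonotoneOp (A : X → Set (Dual' X)) : Prop :=
  ∀ x y (x' y' : Dual' X), x' ∈ A x → y' ∈ A y → 0 ≤ (x' - y') (x - y)

/-- `A` is maximal monotone: monotone, and every monotonically related pair is in the graph. -/
def MaxMonotone (A : X → Set (Dual' X)) : Prop :=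
  MonotoneOp A ∧
    ∀ x (x' : Dual' X), (∀ y y', y' ∈ A y → 0 ≤ (x' - y') (x - y)) → x' ∈ A x

/-- domain of a set-valued operator -/
def domOp (A : X → Set (Dual' X)) : Set X := {x | (A x).Nonempty}

/-- pointwise Minkowski sum of two set-valued operators -/
def opSum (A B : X → Set (Dual' X)) : X → Set (Dual' X) := fun x => A x + B x

/-- normal cone operator of a set `C` -/
def normalCone (C : Set X) : X → Set (Dual' X) :=
  fun x => {x' | x ∈ C ∧ ∀ c ∈ C, x' (c - x) ≤ 0}

/-- the Fitzpatrick function of `A` -/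
def fitz (A : X → Set (Dual' X)) : X × Dual' X → EReal :=
  fun p => ⨆ q ∈ {q : X × Dual' X | q.2 ∈ A q.1},
    ((q.2 p.1 + p.2 q.1 - q.2 q.1 : ℝ) : EReal)

/-- `A` is maximal monotone of type (FPV) -/
def FPV (A : X → Set (Dual' X)) : Prop :=
  MaxMonotone A ∧
    ∀ U : Set X, IsOpen U → Convex ℝ U → (U ∩ domOp A).Nonempty →
      ∀ x (x' : Dual' X), x ∈ U →
        (∀ y y', y' ∈ A y → y ∈ U → 0 ≤ (x' - y') (x - y)) → x' ∈ A x

/-- `A` is a linear relation: its graph is a linear subspace of `X × X*` -/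
def LinearRel (A : X → Set (Dual' X)) : Prop :=
  (0 : Dual' X) ∈ A 0 ∧
  (∀ x y (x' y' : Dual' X), x' ∈ A x → y' ∈ A y → x' + y' ∈ A (x + y)) ∧
  (∀ (c : ℝ) x (x' : Dual' X), x' ∈ A x → c • x' ∈ A (c • x))

/-- subdifferential of an extended-real-valued function -/
def subdiff (f : X → EReal) : X → Set (Dual' X) :=
  fun x => {x' | ∀ y, ((x' (y - x) : ℝ) : EReal) + f x ≤ f y}

/-- `f` is proper: never `⊥` and not identically `⊤` -/
def ProperFun (f : X → EReal) : Prop := (∀ x, f x ≠ ⊥) ∧ ∃ x, f x ≠ ⊤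

/-- convexity for extended-real-valued functions -/
def EConvexOn (f : X → EReal) : Prop :=
  ∀ x y (t : ℝ), 0 ≤ t → t ≤ 1 →
    f (t • x + (1 - t) • y) ≤ (t : EReal) * f x + ((1 - t : ℝ) : EReal) * f y

/-- effective domain of an extended-real-valued function -/
def domFun (f : X → EReal) : Set X := {x | f x ≠ ⊤}

end Defs

section

variable [NormedAddCommGroup X] [NormedSpace ℝ X] {A B T : X → Set (Dual' X)}

lemma domOp_opSum (A B : X → Set (Dual' X)) : domOp (opSum A B) = domOp A ∩ domOp B := by
  ext x
  exact Set.add_nonempty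

lemma domOp_normalCone (C : Set X) : domOp (normalCone C) = C :=
  subset_antisymm (fun _ ⟨_, hx⟩ => hx.1) fun _ hx => ⟨0, hx, fun _ _ => by simp⟩

lemma MonotoneOp.opSum (hA : MonotoneOp A) (hB : MonotoneOp B) : MonotoneOp (opSum A B) := by
  rintro x y _ _ ⟨a, ha, b, hb, rfl⟩ ⟨a', ha', b', hb', rfl⟩
  have := add_nonneg (hA x y a a' ha ha') (hB x y b b' hb hb')
  simp only [sub_apply, add_apply] at this ⊢
  linarith

lemma MonotoneOp.apply_sub_le (hB : MonotoneOp B) {y p : X} {b q : Dual' X} (hb : b ∈ B y)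
    (hq : q ∈ B p) (x₀ : X) : b (p - x₀) ≤ b (y - x₀) + ‖q‖ * ‖p - y‖ := by
  have hmono := hB y p b q hb hq
  have hq_le := le_of_abs_le (q.le_opNorm (p - y))
  simp only [sub_apply, map_sub] at hmono hq_le ⊢
  linarith

lemma MaxMonotone.add_mem_of_mem_normalCone {C : Set X} (hB : MaxMonotone B)
    (hC : domOp B ⊆ C) {y : X} {b ν : Dual' X} (hb : b ∈ B y) (hν : ν ∈ normalCone C y) :
    b + ν ∈ B y := by
  refine hB.2 y (b + ν) fun p q hq => ?_
  have hmono := hB.1 y p b q hb hq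
  have hν_le := hν.2 p (hC ⟨q, hq⟩)
  simp only [sub_apply, add_apply, map_sub] at hmono hν_le ⊢
  linarith

lemma le_fitz {y : X} {t : Dual' X} (ht : t ∈ T y) (p : X × Dual' X) :
    ((t p.1 + p.2 y - t y : ℝ) : EReal) ≤ fitz T p :=
  le_iSup₂_of_le (y, t) ht le_rfl

lemma MonotoneOp.fitz_le (hT : MonotoneOp T) {x : X} {t : Dual' X} (ht : t ∈ T x) :
    fitz T (x, t) ≤ (t x : EReal) := by
  refine iSup₂_le fun q hq => EReal.coe_le_coe_iff.2 ?_
  have := hT x q.1 t q.2 ht hq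
  simp only [sub_apply, map_sub] at this
  linarith

lemma MonotoneOp.domOp_subset_fst_fitz (hT : MonotoneOp T) :
    domOp T ⊆ Prod.fst '' {p | fitz T p < ⊤} :=
  fun x ⟨t, ht⟩ => ⟨(x, t), (hT.fitz_le ht).trans_lt (EReal.coe_lt_top _), rfl⟩

lemma ContinuousLinearMap.opNorm_le_of_apply_le {f : X →L[ℝ] ℝ} {M : ℝ}
    (hf : ∀ u : X, ‖u‖ ≤ 1 → f u ≤ M) : ‖f‖ ≤ M := by
  have hM : 0 ≤ M := by simpa using hf 0 (by simp)
  refine f.opNorm_le_of_unit_norm hM fun u hu => abs_le.2 ⟨?_, hf u hu.le⟩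
  have h := hf (-u) (by simp [hu])
  rw [map_neg] at h
  linarith

lemma MonotoneOp.mul_norm_le (hB : MonotoneOp B) {x₀ y : X} {ρ K : ℝ} {b : Dual' X} (hρ : 0 < ρ)
    (hball : ∀ x ∈ Metric.closedBall x₀ ρ, x ∈ domOp B ∧ ∀ v ∈ B x, ‖v‖ ≤ K) (hb : b ∈ B y) :
    ρ * ‖b‖ ≤ b (y - x₀) + K * (‖y - x₀‖ + ρ) := by
  rw [← le_div_iff₀' hρ]
  refine ContinuousLinearMap.opNorm_le_of_apply_le fun u hu => ?_
  have hρu : ‖ρ • u‖ ≤ ρ := by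
    rw [norm_smul, Real.norm_of_nonneg hρ.le]
    exact mul_le_of_le_one_right hρ.le hu
  obtain ⟨⟨v, hv⟩, hvK⟩ := hball (x₀ + ρ • u) (by simpa using hρu)
  have hdist : ‖x₀ + ρ • u - y‖ ≤ ‖y - x₀‖ + ρ := by
    rw [show x₀ + ρ • u - y = ρ • u - (y - x₀) by abel]
    linarith [norm_sub_le (ρ • u) (y - x₀)]
  have hK : 0 ≤ K := (norm_nonneg v).trans (hvK v hv)
  have key := hB.apply_sub_le hb hv x₀
  rw [add_sub_cancel_left, map_smul, smul_eq_mul] at key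
  rw [le_div_iff₀' hρ]
  linarith [mul_le_mul (hvK v hv) hdist (norm_nonneg _) hK]

lemma MonotoneOp.abs_apply_le (hB : MonotoneOp B) {x₀ w : X} {ρ : ℝ}
    (hball : Metric.closedBall x₀ ρ ⊆ domOp B) (hw : ‖w‖ ≤ ρ) :
    ∃ M ≥ 0, ∀ y ∈ Metric.closedBall x₀ ρ, ∀ b ∈ B y, |b w| ≤ ‖b‖ * ‖y - x₀‖ + M := by
  obtain ⟨q₁, hq₁⟩ := hball (show x₀ + w ∈ _ by simpa using hw)
  obtain ⟨q₂, hq₂⟩ := hball (show x₀ - w ∈ _ by simpa using hw)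
  have hρ : 0 ≤ ρ := (norm_nonneg w).trans hw
  refine ⟨(‖q₁‖ + ‖q₂‖) * (2 * ρ), by positivity, fun y hy b hb => ?_⟩
  rw [Metric.mem_closedBall, dist_eq_norm] at hy
  have hb_le : b (y - x₀) ≤ ‖b‖ * ‖y - x₀‖ := le_of_abs_le (b.le_opNorm _)
  have h₁ : ‖q₁‖ * ‖x₀ + w - y‖ ≤ ‖q₁‖ * (2 * ρ) := by
    refine mul_le_mul_of_nonneg_left ?_ (norm_nonneg _)
    rw [show x₀ + w - y = w - (y - x₀) by abel]
    linarith [norm_sub_le w (y - x₀)]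
  have h₂ : ‖q₂‖ * ‖x₀ - w - y‖ ≤ ‖q₂‖ * (2 * ρ) := by
    refine mul_le_mul_of_nonneg_left ?_ (norm_nonneg _)
    rw [show x₀ - w - y = -(w + (y - x₀)) by abel, norm_neg]
    linarith [norm_add_le w (y - x₀)]
  have m₁ := hB.apply_sub_le hb hq₁ x₀
  have m₂ := hB.apply_sub_le hb hq₂ x₀
  rw [add_sub_cancel_left] at m₁
  rw [sub_sub_cancel_left, map_neg] at m₂
  have : 0 ≤ ‖q₁‖ * (2 * ρ) := by positivity
  have : 0 ≤ ‖q₂‖ * (2 * ρ) := by positivity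
  exact abs_le.2 ⟨by linarith, by linarith⟩

lemma lt_apply_sub_of_mem_segment_add_ball {w : X →L[ℝ] ℝ} {p x y : X} {r : ℝ} (hw : ‖w‖ ≤ 1)
    (hwx : w (x - p) = ‖x - p‖) (hy : y ∈ segment ℝ p x + Metric.ball 0 r) :
    ‖x - y‖ < ‖x - p‖ + r ∧ ‖x - y‖ - 2 * r < w (x - y) := by
  obtain ⟨_, ⟨a, c, ha, hc, hac, rfl⟩, e, he, rfl⟩ := hy
  rw [mem_ball_zero_iff] at he
  obtain rfl : c = 1 - a := by linarith
  have hxy : x - (a • p + (1 - a) • x + e) = a • (x - p) - e := by module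
  have hnorm : ‖x - (a • p + (1 - a) • x + e)‖ ≤ a * ‖x - p‖ + ‖e‖ := by
    rw [hxy]
    exact (norm_sub_le _ _).trans_eq (by rw [norm_smul, Real.norm_of_nonneg ha])
  have hwe : w e ≤ ‖e‖ :=
    le_of_abs_le ((w.le_opNorm e).trans (mul_le_of_le_one_left (norm_nonneg e) hw))
  have ha₁ : a * ‖x - p‖ ≤ ‖x - p‖ := mul_le_of_le_one_left (norm_nonneg _) (by linarith)
  rw [hxy, map_sub, map_smul, smul_eq_mul, hwx]
  rw [hxy] at hnorm
  constructor <;> linarith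

theorem FPV.mem_closure_domOp {S : X → Set (Dual' X)} (hS : FPV S) {x p : X} {δ C : ℝ}
    (hp : p ∈ closure (domOp S)) (hxp : dist x p ≤ δ / 2)
    (hbound : ∀ y s, s ∈ S y → dist y x ≤ δ → s (x - y) ≤ C) : x ∈ closure (domOp S) := by
  by_contra hx
  set d := Metric.infDist x (closure (domOp S))
  have hd : 0 < d := (isClosed_closure.notMem_iff_infDist_pos ⟨p, hp⟩).1 hx
  have hdp : d ≤ ‖x - p‖ := by rw [← dist_eq_norm]; exact Metric.infDist_le_dist_of_mem hp
  obtain ⟨w, hw, hwx⟩ := exists_dual_vector ℝ (x - p) (by linarith)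
  set U := segment ℝ p x + Metric.ball (0 : X) (d / 4)
  -- the points of `U` in `closure (domOp S)` lie near the `p` end of the segment
  have hU : ∀ y ∈ U, y ∈ closure (domOp S) → dist y x ≤ δ ∧ d / 2 < w (x - y) := by
    intro y hyU hyS
    obtain ⟨h₁, h₂⟩ := lt_apply_sub_of_mem_segment_add_ball hw.le hwx hyU
    have hdy : d ≤ ‖x - y‖ := by
      rw [← dist_eq_norm]
      exact Metric.infDist_le_dist_of_mem hyS
    rw [dist_eq_norm] at hxp
    rw [dist_eq_norm, norm_sub_rev]
    constructor <;> linarith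
  obtain ⟨y₀, hy₀, hy₀p⟩ := Metric.mem_closure_iff.1 hp (d / 4) (by positivity)
  have hmeet : (U ∩ domOp S).Nonempty :=
    ⟨y₀, ⟨p, left_mem_segment ℝ p x, y₀ - p, by rwa [mem_ball_zero_iff, ← dist_eq_norm, dist_comm],
      add_sub_cancel p y₀⟩, hy₀⟩
  have hxU : x ∈ U :=
    ⟨x, right_mem_segment ℝ p x, 0, Metric.mem_ball_self (by positivity), add_zero x⟩
  set n := 2 * max C 0 / d
  have hn : n * (d / 2) = max C 0 := by simp only [n]; field_simp
  refine hx (subset_closure ⟨n • w, hS.2 U Metric.isOpen_ball.add_left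
    ((convex_segment p x).add (convex_ball 0 _)) hmeet x (n • w) hxU fun y s hs hyU => ?_⟩)
  obtain ⟨hyx, hwy⟩ := hU y hyU (subset_closure ⟨s, hs⟩)
  have hsC := hbound y s hs hyx
  have hnw := mul_le_mul_of_nonneg_left hwy.le (by positivity : 0 ≤ n)
  rw [sub_apply, smul_apply, smul_eq_mul]
  linarith [le_max_left C 0]

open AffineMap

lemma apply_lineMap_sub_le_of_fitz_le {T : X → Set (Dual' X)} {x₀ y z : X} {c z' : Dual' X}
    {r t : ℝ} (hc : c ∈ T y) (hr : fitz T (z, z') ≤ r) (ht : 0 ≤ t) :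
    c (lineMap x₀ z t - y) ≤ t * (r - z' y) - (1 - t) * c (y - x₀) := by
  have h : c z + z' y - c y ≤ r := EReal.coe_le_coe_iff.1 ((le_fitz hc (z, z')).trans hr)
  rw [lineMap_apply_module', map_sub, map_add, map_smul, smul_eq_mul, map_sub, map_sub]
  nlinarith [mul_le_mul_of_nonneg_left h ht]

variable {C : Set X} {x₀ z : X} {a₀ z' : Dual' X} {ρ K r t : ℝ}

lemma opSum_normalCone_apply_le (hA : MonotoneOp A) (hB : MaxMonotone B) (hC : domOp B ⊆ C)
    (ha₀ : a₀ ∈ A x₀) (hρ : 0 < ρ)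
    (hball : ∀ x ∈ Metric.closedBall x₀ ρ, x ∈ domOp B ∧ ∀ v ∈ B x, ‖v‖ ≤ K)
    (hr : fitz (opSum A B) (z, z') ≤ r) (ht₀ : 0 ≤ t) (ht₁ : t ≤ 1) {y : X} {a b ν : Dual' X}
    (ha : a ∈ A y) (hb : b ∈ B y) (hν : ν ∈ normalCone C y)
    (hy : ‖lineMap x₀ z t - y‖ ≤ (1 - t) * ρ) :
    (a + ν) (lineMap x₀ z t - y) ≤ |r| + ‖z'‖ * ‖y‖ + (‖a₀‖ + K) * ‖y - x₀‖ + K * ρ := by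
  obtain ⟨hx₀B, hx₀K⟩ := hball x₀ (Metric.mem_closedBall_self hρ.le)
  have hK : 0 ≤ K := (norm_nonneg _).trans (hx₀K _ hx₀B.some_mem)
  have hfitz := apply_lineMap_sub_le_of_fitz_le (x₀ := x₀)
    (Set.add_mem_add ha (hB.add_mem_of_mem_normalCone hC hb hν)) hr ht₀
  have hz' : t * (r - z' y) ≤ |r| + ‖z'‖ * ‖y‖ := by
    have h₁ : -(‖z'‖ * ‖y‖) ≤ z' y := neg_le_of_abs_le (z'.le_opNorm y)
    nlinarith [le_abs_self r, abs_nonneg r, mul_nonneg (norm_nonneg z') (norm_nonneg y)]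
  have ha' : -(‖a₀‖ * ‖y - x₀‖) ≤ a (y - x₀) := by
    have hmono := hA y x₀ a a₀ ha ha₀
    have h₁ := neg_le_of_abs_le (a₀.le_opNorm (y - x₀))
    rw [sub_apply] at hmono
    linarith
  have hν' : 0 ≤ ν (y - x₀) := by
    have h₁ := hν.2 x₀ (hC hx₀B)
    rw [← neg_sub, map_neg] at h₁
    linarith
  have hb' := hB.1.mul_norm_le hρ hball hb
  have hbt : -(‖b‖ * ((1 - t) * ρ)) ≤ b (lineMap x₀ z t - y) :=
    neg_le_of_abs_le ((b.le_opNorm _).trans (mul_le_mul_of_nonneg_left hy (norm_nonneg b)))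
  have h₁t : 0 ≤ 1 - t := by linarith
  simp only [add_apply] at hfitz ⊢
  nlinarith [mul_le_mul_of_nonneg_left hb' h₁t, mul_le_mul_of_nonneg_left ha' h₁t,
    mul_nonneg h₁t hν', mul_nonneg (mul_nonneg hK (add_nonneg (norm_nonneg (y - x₀)) hρ.le)) ht₀,
    mul_nonneg (mul_nonneg (norm_nonneg a₀) (norm_nonneg (y - x₀))) ht₀]

lemma exists_opSum_normalCone_apply_le (hA : MonotoneOp A) (hB : MaxMonotone B)
    (hC : domOp B ⊆ C) (hsub : domOp A ∩ C ⊆ domOp B) (ha₀ : a₀ ∈ A x₀) (hρ : 0 < ρ)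
    (hball : ∀ x ∈ Metric.closedBall x₀ ρ, x ∈ domOp B ∧ ∀ v ∈ B x, ‖v‖ ≤ K)
    (hr : fitz (opSum A B) (z, z') ≤ r) (ht₀ : 0 ≤ t) (ht₁ : t ≤ 1) :
    ∃ M, ∀ y s, s ∈ opSum A (normalCone C) y → dist y (lineMap x₀ z t) ≤ (1 - t) * ρ →
      s (lineMap x₀ z t - y) ≤ M := by
  obtain ⟨hx₀B, hx₀K⟩ := hball x₀ (Metric.mem_closedBall_self hρ.le)
  have hK : 0 ≤ K := (norm_nonneg _).trans (hx₀K _ hx₀B.some_mem)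
  set xₜ := lineMap x₀ z t
  set δ := (1 - t) * ρ
  refine ⟨|r| + ‖z'‖ * (‖xₜ‖ + δ) + (‖a₀‖ + K) * (‖xₜ - x₀‖ + δ) + K * ρ, ?_⟩
  rintro y _ ⟨a, ha, ν, hν, rfl⟩ hy
  obtain ⟨b, hb⟩ := hsub ⟨⟨a, ha⟩, hν.1⟩
  rw [dist_eq_norm] at hy
  have hy' : ‖xₜ - y‖ ≤ δ := by rwa [norm_sub_rev]
  have hyn : ‖y‖ ≤ ‖xₜ‖ + δ := by linarith [norm_le_norm_add_norm_sub' y xₜ]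
  have hyx₀ : ‖y - x₀‖ ≤ ‖xₜ - x₀‖ + δ := by linarith [norm_sub_le_norm_sub_add_norm_sub y xₜ x₀]
  have := opSum_normalCone_apply_le hA hB hC ha₀ hρ hball hr ht₀ ht₁ ha hb hν hy'
  nlinarith [mul_le_mul_of_nonneg_left hyn (norm_nonneg z'),
    mul_le_mul_of_nonneg_left hyx₀ (add_nonneg (norm_nonneg a₀) hK)]

end

variable [NormedAddCommGroup X] [NormedSpace ℝ X] [CompleteSpace X]

theorem MonotoneOp.exists_norm_le_on_closedBall {B : X → Set (Dual' X)} (hB : MonotoneOp B)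
    {x₀ : X} (hx₀ : x₀ ∈ interior (domOp B)) :
    ∃ ρ > 0, ∃ K, ∀ x ∈ Metric.closedBall x₀ ρ, x ∈ domOp B ∧ ∀ v ∈ B x, ‖v‖ ≤ K := by
  obtain ⟨ρ, hρ, hball⟩ := Metric.nhds_basis_closedBall.mem_iff.1 (mem_interior_iff_mem_nhds.1 hx₀)
  let g : {p : X × Dual' X // p.1 ∈ Metric.closedBall x₀ ρ ∧ p.2 ∈ B p.1} → Dual' X :=
    fun p => (1 + ‖p.1.2‖ * ‖p.1.1 - x₀‖)⁻¹ • p.1.2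
  have hg : ∀ p, ‖g p‖ = (1 + ‖p.1.2‖ * ‖p.1.1 - x₀‖)⁻¹ * ‖p.1.2‖ := fun p => by
    rw [norm_smul, Real.norm_of_nonneg (by positivity)]
  have hg_apply : ∀ p u, ‖g p u‖ = (1 + ‖p.1.2‖ * ‖p.1.1 - x₀‖)⁻¹ * |p.1.2 u| := fun p u => by
    rw [smul_apply, norm_smul, Real.norm_of_nonneg (by positivity), Real.norm_eq_abs]
  -- the weights make `g` pointwise bounded, so Banach–Steinhaus bounds it uniformly
  obtain ⟨L, hL⟩ : ∃ L, ∀ p, ‖g p‖ ≤ L := by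
    refine banach_steinhaus fun u => ?_
    set c := ρ / (‖u‖ + 1)
    have hc : 0 < c := by positivity
    have hcu : ‖c • u‖ ≤ ρ := by
      rw [norm_smul, Real.norm_of_nonneg hc.le, div_mul_eq_mul_div, div_le_iff₀ (by positivity)]
      nlinarith [norm_nonneg u]
    obtain ⟨M, hM, hbound⟩ := hB.abs_apply_le hball hcu
    refine ⟨(1 + M) / c, fun ⟨⟨y, b⟩, hy, hb⟩ => ?_⟩
    have h := hbound y hy b hb
    rw [map_smul, smul_eq_mul, abs_mul, abs_of_pos hc] at h
    rw [hg_apply, inv_mul_le_iff₀ (by positivity), mul_div_assoc', le_div_iff₀ hc]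
    nlinarith [mul_nonneg (norm_nonneg b) (norm_nonneg (y - x₀))]
  obtain ⟨b₀, hb₀⟩ := hball (Metric.mem_closedBall_self hρ.le)
  have hL₀ : 0 ≤ L := (norm_nonneg _).trans (hL ⟨(x₀, b₀), Metric.mem_closedBall_self hρ.le, hb₀⟩)
  set r := min ρ (1 / (2 * L + 1))
  refine ⟨r, lt_min hρ (by positivity), 2 * L, fun y hy => ?_⟩
  have hyρ : y ∈ Metric.closedBall x₀ ρ := Metric.closedBall_subset_closedBall (min_le_left _ _) hy
  refine ⟨hball hyρ, fun b hb => ?_⟩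
  have hLb := hL ⟨(y, b), hyρ, hb⟩
  rw [hg, inv_mul_le_iff₀ (by positivity)] at hLb
  have hLy : L * ‖y - x₀‖ ≤ 1 / 2 := by
    rw [Metric.mem_closedBall, dist_eq_norm] at hy
    calc L * ‖y - x₀‖ ≤ L * (1 / (2 * L + 1)) :=
          mul_le_mul_of_nonneg_left (hy.trans (min_le_right _ _)) hL₀
      _ ≤ 1 / 2 := by rw [mul_one_div, div_le_div_iff₀ (by positivity) two_pos]; linarith
  nlinarith [norm_nonneg b]

open AffineMap Topology in
theorem stmt5 (A B : X → Set (Dual' X)) (hA : MaxMonotone A) (hB : MaxMonotone B)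
    (hint : (domOp A ∩ interior (domOp B)).Nonempty)
    (hFPV : FPV (opSum A (normalCone (closure (domOp B)))))
    (hsub : domOp A ∩ closure (domOp B) ⊆ domOp B) :
    closure (Prod.fst '' {p : X × Dual' X | fitz (opSum A B) p < ⊤}) =
      closure (domOp A ∩ domOp B) := by
  set S := opSum A (normalCone (closure (domOp B)))
  have hdomS : domOp S = domOp A ∩ domOp B := by
    rw [domOp_opSum, domOp_normalCone]
    exact subset_antisymm (fun x hx => ⟨hx.1, hsub hx⟩) (inter_subset_inter_right _ subset_closure)
  refine subset_antisymm ?_ (closure_mono ((domOp_opSum A B).symm.trans_subset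
    (hA.1.opSum hB.1).domOp_subset_fst_fitz))
  rw [← hdomS]
  refine closure_minimal ?_ isClosed_closure
  rintro _ ⟨⟨z, z'⟩, hz, rfl⟩
  obtain ⟨r, hr⟩ : ∃ r : ℝ, fitz (opSum A B) (z, z') ≤ r := ⟨_, EReal.le_coe_toReal hz.ne⟩
  obtain ⟨x₀, ⟨a₀, ha₀⟩, hx₀⟩ := hint
  have hx₀S : x₀ ∈ domOp S := hdomS ▸ ⟨⟨a₀, ha₀⟩, interior_subset hx₀⟩
  obtain ⟨ρ, hρ, K, hball⟩ := hB.1.exists_norm_le_on_closedBall hx₀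
  -- continuous induction along the segment from `x₀` to `z`
  suffices Icc (0 : ℝ) 1 ⊆ lineMap x₀ z ⁻¹' closure (domOp S) by
    simpa using this (right_mem_Icc.2 zero_le_one)
  refine IsClosed.Icc_subset_of_forall_mem_nhdsWithin
    ((isClosed_closure.preimage lineMap_continuous).inter isClosed_Icc)
    (by simpa using subset_closure hx₀S) ?_
  rintro s ⟨hs, hs₀, hs₁⟩
  have hnear : ∀ᶠ t in 𝓝 s, (t - s) * ‖z - x₀‖ < (1 - t) * ρ / 2 :=
    ContinuousAt.eventually_lt (by fun_prop) (by fun_prop) (by rw [sub_self, zero_mul]; nlinarith)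
  filter_upwards [self_mem_nhdsWithin, nhdsWithin_le_nhds hnear] with t (hst : s < t) ht
  have ht₁ : t ≤ 1 := by nlinarith [norm_nonneg (z - x₀)]
  obtain ⟨M, hM⟩ := exists_opSum_normalCone_apply_le hA.1 hB subset_closure hsub ha₀ hρ hball hr
    (hs₀.trans hst.le) ht₁
  refine hFPV.mem_closure_domOp hs ?_ hM
  rw [dist_lineMap_lineMap, Real.dist_eq, abs_of_pos (sub_pos.2 hst), dist_eq_norm']
  linarith
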